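/- In the setting of the main order-bound theorem, if the sequence satisfies deg A_0 < min{0, deg C} and deg A_n > max{2g-2, 2g-2+deg C}, then |Δ| - |Δ'| = deg C, where Δ = {i : A_i ∈ Γ_{P_i} and A_i - C ∉ Γ_{P_i}} and Δ' = {i : A_i ∉ Γ_{P_i} and A_i - C ∈ Γ_{P_i}}. -/

import Mathlib

noncomputable section

/-- Degree of a divisor, where divisors on the curve are modeled as finitely
supported integer valued functions on the set of rational points. -/
def degr {Point : Type*} (D : Point →₀ ℤ) : ℤ := D.sum fun _ n => n

/-- An abstract model of a smooth projective absolutely irreducible curve over a field,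
recording the data used in the paper: the dimension `l D` of the Riemann-Roch space
`L(D)`, the genus `g`, a canonical divisor `K`, and linear equivalence `lin`,
together with their basic properties (Riemann-Roch, monotonicity, semigroup
properties of nongaps, etc.). -/
structure Curve (Point : Type*) where
  /-- `l D = dim L(D)` -/
  l : (Point →₀ ℤ) → ℕ
  /-- the genus -/
  g : ℕ
  /-- a canonical divisor -/
  K : Point →₀ ℤ
  /-- linear equivalence of divisors -/
  lin : (Point →₀ ℤ) → (Point →₀ ℤ) → Prop
  lin_refl : ∀ A, lin A A
  lin_symm : ∀ {A B}, lin A B → lin B A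
  lin_trans : ∀ {A B C}, lin A B → lin B C → lin A C
  lin_add : ∀ {A B} (E : Point →₀ ℤ), lin A B → lin (A + E) (B + E)
  deg_lin : ∀ {A B}, lin A B → degr A = degr B
  l_lin : ∀ {A B}, lin A B → l A = l B
  l_zero : l 0 = 1
  l_neg : ∀ {D}, degr D < 0 → l D = 0
  l_mono : ∀ (D : Point →₀ ℤ) (P : Point), l D ≤ l (D + Finsupp.single P 1)
  l_step : ∀ (D : Point →₀ ℤ) (P : Point), l (D + Finsupp.single P 1) ≤ l D + 1
  /-- Riemann-Roch -/
  rr : ∀ D : Point →₀ ℤ, (l D : ℤ) - l (K - D) = degr D + 1 - g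
  lin_of_deg_zero : ∀ {D}, l D ≠ 0 → degr D = 0 → lin D 0
  /-- the semigroup property of `Γ_P` -/
  gamma_add : ∀ (P : Point) {A B}, l A ≠ l (A - Finsupp.single P 1) →
      l B ≠ l (B - Finsupp.single P 1) → l (A + B) ≠ l (A + B - Finsupp.single P 1)
  eff_add : ∀ {A B}, l A ≠ 0 → l B ≠ 0 → l (A + B) ≠ 0
  point_nongap : ∀ {P Q : Point}, P ≠ Q →
      l (Finsupp.single P 1) ≠ l (Finsupp.single P 1 - Finsupp.single Q 1)

variable {Point : Type*}

/-- `Γ_P` : divisor (classes) with no base point at `P`, i.e. `L(A) ≠ L(A-P)`. -/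
def GammaP (X : Curve Point) (P : Point) : Set (Point →₀ ℤ) :=
  {A | X.l A ≠ X.l (A - Finsupp.single P 1)}

/-- `Γ_S = ∩_{P ∈ S} Γ_P`, with the convention `Γ_∅ = Γ = {A : L(A) ≠ 0}`. -/
def GammaS (X : Curve Point) (S : Finset Point) : Set (Point →₀ ℤ) :=
  {A | (S = ∅ → X.l A ≠ 0) ∧ ∀ P ∈ S, A ∈ GammaP X P}

/-- `Γ(C; S, S') = {A : A ∈ Γ_S and A - C ∈ Γ_{S'}}`. -/
def GammaSet (X : Curve Point) (C : Point →₀ ℤ) (S S' : Finset Point) :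
    Set (Point →₀ ℤ) :=
  {A | A ∈ GammaS X S ∧ A - C ∈ GammaS X S'}

/-- `γ(C; S, S') = min {deg A : A ∈ Γ(C; S, S')}`. -/
def gammaMin (X : Curve Point) (C : Point →₀ ℤ) (S S' : Finset Point) : ℤ :=
  sInf (degr '' GammaSet X C S S')

/-- `Δ = {i : A_i ∈ Γ_{P_i} and A_i - C ∉ Γ_{P_i}}` for indices `1 ≤ i ≤ n`. -/
def Delta (X : Curve Point) (C : Point →₀ ℤ) (n : ℕ) (A : ℕ → Point →₀ ℤ)
    (P : ℕ → Point) : Set ℕ :=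
  {i | 1 ≤ i ∧ i ≤ n ∧ A i ∈ GammaP X (P i) ∧ A i - C ∉ GammaP X (P i)}

/-- `Δ' = {i : A_i ∉ Γ_{P_i} and A_i - C ∈ Γ_{P_i}}` for indices `1 ≤ i ≤ n`. -/
def Delta' (X : Curve Point) (C : Point →₀ ℤ) (n : ℕ) (A : ℕ → Point →₀ ℤ)
    (P : ℕ → Point) : Set ℕ :=
  {i | 1 ≤ i ∧ i ≤ n ∧ A i ∉ GammaP X (P i) ∧ A i - C ∈ GammaP X (P i)}

/-! Both `|Δ| - |Δ'|` and `deg C` are the total change of `l(A_i) - l(A_i - C)` along the chain: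
each step `A_{i-1} ⟶ A_i` raises `l(A_i)` by `[A_i ∈ Γ_{P_i}]` and `l(A_i - C)` by
`[A_i - C ∈ Γ_{P_i}]`, so the telescoping sum counts `Δ` positively and `Δ'` negatively, while
Riemann–Roch evaluates the end points: `0` at `A_0` and `deg C` at `A_n`. -/

theorem degr_add (A B : Point →₀ ℤ) : degr (A + B) = degr A + degr B :=
  Finsupp.sum_add_index' (fun _ => rfl) (fun _ _ _ => rfl)

theorem degr_sub (A B : Point →₀ ℤ) : degr (A - B) = degr A - degr B := by
  rw [eq_sub_iff_add_eq, ← degr_add, sub_add_cancel]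

theorem degr_zero : degr (0 : Point →₀ ℤ) = 0 := Finsupp.sum_zero_index

namespace Curve

variable (X : Curve Point)

theorem degr_K : degr X.K = 2 * (X.g : ℤ) - 2 := by
  have h0 := X.rr 0
  have hK := X.rr X.K
  rw [sub_zero, degr_zero, X.l_zero] at h0
  rw [sub_self, X.l_zero] at hK
  omega

theorem l_eq_of_two_mul_g_sub_two_lt_degr {D : Point →₀ ℤ}
    (hD : 2 * (X.g : ℤ) - 2 < degr D) : (X.l D : ℤ) = degr D + 1 - X.g := by
  have hKD : degr (X.K - D) < 0 := by rw [degr_sub, degr_K]; omega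
  simpa [X.l_neg hKD] using X.rr D

open Classical in
theorem l_add_single (D : Point →₀ ℤ) (P : Point) :
    (X.l (D + .single P 1) : ℤ) = X.l D + if D + .single P 1 ∈ GammaP X P then 1 else 0 := by
  have hmono := X.l_mono D P
  have hstep := X.l_step D P
  split_ifs with hP <;>
  · simp only [GammaP, Set.mem_ofPred_eq, add_sub_cancel_right, not_not] at hP
    omega

open Classical in
theorem l_sub_l_sub_add_single (C A : Point →₀ ℤ) (P : Point) :
    ((X.l (A + .single P 1) : ℤ) - X.l (A + .single P 1 - C)) - (X.l A - X.l (A - C)) =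
      (if A + .single P 1 ∈ GammaP X P ∧ A + .single P 1 - C ∉ GammaP X P then 1 else 0) -
      (if A + .single P 1 ∉ GammaP X P ∧ A + .single P 1 - C ∈ GammaP X P then 1 else 0) := by
  have hC : A + .single P 1 - C = (A - C) + .single P 1 := by abel
  rw [hC, X.l_add_single A P, X.l_add_single (A - C) P]
  by_cases hA : A + .single P 1 ∈ GammaP X P <;> by_cases hAC : A - C + .single P 1 ∈ GammaP X P <;>
    simp [hA, hAC]

end Curve

theorem ncard_Delta_sub_ncard_Delta' (X : Curve Point) (C : Point →₀ ℤ)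
    (n : ℕ) (A : ℕ → Point →₀ ℤ) (P : ℕ → Point)
    (hA : ∀ i, 1 ≤ i → i ≤ n → A i = A (i - 1) + Finsupp.single (P i) 1) :
    ((Delta X C n A P).ncard : ℤ) - (Delta' X C n A P).ncard =
      ((X.l (A n) : ℤ) - X.l (A n - C)) - (X.l (A 0) - X.l (A 0 - C)) := by
  classical
  set F : ℕ → ℤ := fun i => X.l (A i) - X.l (A i - C)
  have hDelta : Delta X C n A P = ↑{i ∈ Finset.Icc 1 n |
      A i ∈ GammaP X (P i) ∧ A i - C ∉ GammaP X (P i)} := by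
    ext i; simp [Delta, and_assoc]
  have hDelta' : Delta' X C n A P = ↑{i ∈ Finset.Icc 1 n |
      A i ∉ GammaP X (P i) ∧ A i - C ∈ GammaP X (P i)} := by
    ext i; simp [Delta', and_assoc]
  have htelescope : ∑ i ∈ Finset.Icc 1 n, (F i - F (i - 1)) = F n - F 0 := by
    rw [← Finset.Ico_succ_right_eq_Icc, Finset.sum_Ico_eq_sum_range]
    simpa [add_comm] using Finset.sum_range_sub F n
  rw [hDelta, hDelta', Set.ncard_coe_finset, Set.ncard_coe_finset, ← htelescope,
    ← Finset.sum_boole, ← Finset.sum_boole, ← Finset.sum_sub_distrib]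
  refine Finset.sum_congr rfl fun i hi => ?_
  rw [Finset.mem_Icc] at hi
  have hstep := X.l_sub_l_sub_add_single C (A (i - 1)) (P i)
  rw [← hA i hi.1 hi.2] at hstep
  exact hstep.symm

/-- In the setting of the main order-bound theorem, if the sequence
`A_i = A_{i-1} + P_i` satisfies `deg A_0 < min {0, deg C}` and
`deg A_n > max {2g-2, 2g-2+deg C}`, then `|Δ| - |Δ'| = deg C`, where
`Δ = {i : A_i ∈ Γ_{P_i} and A_i - C ∉ Γ_{P_i}}` and
`Δ' = {i : A_i ∉ Γ_{P_i} and A_i - C ∈ Γ_{P_i}}`. -/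
theorem delta_diff_eq_deg (X : Curve Point) (C : Point →₀ ℤ)
    (n : ℕ) (A : ℕ → Point →₀ ℤ) (P : ℕ → Point)
    (hA : ∀ i, 1 ≤ i → i ≤ n → A i = A (i - 1) + Finsupp.single (P i) 1)
    (h0 : degr (A 0) < min 0 (degr C))
    (hn : degr (A n) > max (2 * (X.g : ℤ) - 2) (2 * (X.g : ℤ) - 2 + degr C)) :
    ((Delta X C n A P).ncard : ℤ) - ((Delta' X C n A P).ncard : ℤ) = degr C := by
  have hA0 : degr (A 0) < 0 := h0.trans_le (min_le_left _ _)
  have hA0C : degr (A 0 - C) < 0 := by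
    have := h0.trans_le (min_le_right _ _)
    rw [degr_sub]; omega
  have hAn : 2 * (X.g : ℤ) - 2 < degr (A n) := (le_max_left _ _).trans_lt hn
  have hAnC : 2 * (X.g : ℤ) - 2 < degr (A n - C) := by
    have := (le_max_right _ _).trans_lt hn
    rw [degr_sub]; omega
  rw [ncard_Delta_sub_ncard_Delta' X C n A P hA, X.l_neg hA0, X.l_neg hA0C,
    X.l_eq_of_two_mul_g_sub_two_lt_degr hAn, X.l_eq_of_two_mul_g_sub_two_lt_degr hAnC, degr_sub]
  ring
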